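/- arXiv:1102.2672 — 2 statements merged into one kernel-verified Lean document; each statement's English description precedes it below -/
import Mathlib

section
/- Let d, n ≥ 1 be integers, ρ ∈ ℂ with ρⁿ = 1, m an integer, c₁, …, c_d ∈ ℂ and b₁, …, b_d ∈ ℝ. For i = 1, …, d and j ∈ ℤ/nℤ define the quadratic p_{i,j}(u) = −conj(cᵢ)·ρ^{−j}·u² + 2bᵢ·u + cᵢ·ρ^{j}. Then for all z, u ∈ ℂ: ∏_{i=1}^{d} ∏_{j ∈ ℤ/nℤ} ( ρᵐ z − p_{i,j}(ρᵐ u) ) = ∏_{i=1}^{d} ∏_{j ∈ ℤ/nℤ} ( z − p_{i,j}(u) ). In other words, the defining equation xy = ∏_{i,j}(z − p_{i,j}(u)) of the twistor hypersurface is invariant under the substitution (x, y, z, u) ↦ (ρx, ρ⁻¹y, ρᵐz, ρᵐu). -/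
/-! The map `u ↦ ρᵐu` shifts the index of the sections: `ρ^{-m} p_j(ρᵐu) = p_{j-m}(u)`.
Since `ρⁿ = 1`, the sections `p_j` depend only on `j mod n`, so the shift merely permutes the
factors of each product over a full period, while the scalar `ρᵐ` pulled out of the `n` factors
contributes `(ρᵐ)ⁿ = (ρⁿ)ᵐ = 1`. -/

open Finset Function

namespace Function.Periodic

variable {M : Type*} [CommMonoid M] {f : ℤ → M} {n : ℕ}

theorem prod_range_comp_add_one (hf : Periodic f n) :
    ∏ j ∈ range n, f (j + 1) = ∏ j ∈ range n, f j := by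
  cases n with
  | zero => rfl
  | succ k =>
    rw [prod_range_succ, prod_range_succ']
    congr 1
    simpa using hf 0

theorem prod_range_comp_add (hf : Periodic f n) (a : ℤ) :
    ∏ j ∈ range n, f (j + a) = ∏ j ∈ range n, f j := by
  induction a using Int.induction_on with
  | zero => simp
  | succ a ih =>
    rw [← ih, ← (hf.add_const a).prod_range_comp_add_one]
    simp only [add_right_comm _ (1 : ℤ), add_assoc]
  | pred a ih =>
    rw [← ih, ← (hf.add_const (-a - 1)).prod_range_comp_add_one]
    simp only [add_assoc, add_sub_cancel]

end Function.Periodic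

theorem periodic_zpow_of_pow_eq_one {G₀ : Type*} [GroupWithZero G₀] {ρ : G₀} {n : ℕ}
    (hρ : ρ ^ n = 1) : Periodic (fun j : ℤ ↦ ρ ^ j) n := by
  obtain rfl | hn := eq_or_ne n 0
  · exact periodic_with_period_zero _
  have hρ0 : ρ ≠ 0 := by rintro rfl; simp [hn] at hρ
  intro j
  simp [zpow_add₀ hρ0, hρ]

section TwistorSection

variable {K : Type*} [Field K] {ρ : K} {n : ℕ}

-- `p_{i,j}` is `twistorSection ρ (-conj cᵢ) (2bᵢ) cᵢ j`.
def twistorSection (ρ a b c : K) (j : ℤ) (u : K) : K :=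
  a * ρ ^ (-j) * u ^ 2 + b * u + c * ρ ^ j

theorem twistorSection_zpow_mul (hρ : ρ ≠ 0) (a b c : K) (j m : ℤ) (u : K) :
    twistorSection ρ a b c j (ρ ^ m * u) = ρ ^ m * twistorSection ρ a b c (j - m) u := by
  simp only [twistorSection, neg_sub, zpow_sub₀ hρ, zpow_neg]
  field_simp

theorem periodic_twistorSection (hρ : ρ ^ n = 1) (a b c u : K) :
    Periodic (fun j ↦ twistorSection ρ a b c j u) n := by
  intro j
  simp only [twistorSection, zpow_neg, periodic_zpow_of_pow_eq_one hρ j]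

theorem prod_range_twistorSection_zpow_mul (hρ : ρ ^ n = 1) (a b c z u : K) (m : ℤ) :
    ∏ j ∈ range n, (ρ ^ m * z - twistorSection ρ a b c j (ρ ^ m * u)) =
      ∏ j ∈ range n, (z - twistorSection ρ a b c j u) := by
  obtain rfl | hn := eq_or_ne n 0
  · simp
  have hρ0 : ρ ≠ 0 := by rintro rfl; simp [hn] at hρ
  calc _ = (ρ ^ m) ^ n * ∏ j ∈ range n, (z - twistorSection ρ a b c (j - m) u) := by
        simp only [twistorSection_zpow_mul hρ0, ← mul_sub, prod_mul_distrib, prod_const, card_range]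
    _ = ∏ j ∈ range n, (z - twistorSection ρ a b c (j - m) u) := by
        rw [← zpow_natCast, ← zpow_mul, mul_comm m, zpow_mul, zpow_natCast, hρ, one_zpow, one_mul]
    _ = _ := by
        simpa only [comp_apply, sub_eq_add_neg] using
          ((periodic_twistorSection hρ a b c u).comp (z - ·)).prod_range_comp_add (-m)

end TwistorSection

theorem twistor_hypersurface_invariant_general (d n : ℕ)
    (ρ : ℂ) (hρ : ρ ^ n = 1) (m : ℤ) (c : Fin d → ℂ) (bb : Fin d → ℝ) (z u : ℂ) :
    (∏ i, ∏ j ∈ Finset.range n,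
        (ρ ^ m * z -
          (-(starRingEnd ℂ) (c i) * ρ ^ (-(j : ℤ)) * (ρ ^ m * u) ^ 2
            + 2 * ((bb i : ℝ) : ℂ) * (ρ ^ m * u) + c i * ρ ^ (j : ℤ)))) =
    ∏ i, ∏ j ∈ Finset.range n,
        (z - (-(starRingEnd ℂ) (c i) * ρ ^ (-(j : ℤ)) * u ^ 2
            + 2 * ((bb i : ℝ) : ℂ) * u + c i * ρ ^ (j : ℤ))) :=
  prod_congr rfl fun _ _ ↦ prod_range_twistorSection_zpow_mul hρ _ _ _ z u m

/-- With `p_{i,j}(u) = −conj(cᵢ)·ρ^(−j)·u² + 2bᵢ·u + cᵢ·ρ^j` (for `i = 1,…,d`, `j ∈ ℤ/nℤ`)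
and `ρ^n = 1`, for all `z, u ∈ ℂ`:
`∏_{i,j}(ρ^m z − p_{i,j}(ρ^m u)) = ∏_{i,j}(z − p_{i,j}(u))`; i.e. the twistor hypersurface
`xy = ∏_{i,j}(z − p_{i,j}(u))` is invariant under `(x,y,z,u) ↦ (ρx, ρ⁻¹y, ρ^m z, ρ^m u)`. -/
theorem twistor_hypersurface_invariant (d n : ℕ) (hd : 1 ≤ d) (hn : 1 ≤ n)
    (ρ : ℂ) (hρ : ρ ^ n = 1) (m : ℤ) (c : Fin d → ℂ) (bb : Fin d → ℝ) (z u : ℂ) :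
    (∏ i, ∏ j ∈ Finset.range n,
        (ρ ^ m * z -
          (-(starRingEnd ℂ) (c i) * ρ ^ (-(j : ℤ)) * (ρ ^ m * u) ^ 2
            + 2 * ((bb i : ℝ) : ℂ) * (ρ ^ m * u) + c i * ρ ^ (j : ℤ)))) =
    ∏ i, ∏ j ∈ Finset.range n,
        (z - (-(starRingEnd ℂ) (c i) * ρ ^ (-(j : ℤ)) * u ^ 2
            + 2 * ((bb i : ℝ) : ℂ) * u + c i * ρ ^ (j : ℤ))) :=
  twistor_hypersurface_invariant_general d n ρ hρ m c bb z u
end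

section
/- Let d, n ≥ 1 be integers, ρ ∈ ℂ with ρⁿ = 1, m an integer, c₁, …, c_d ∈ ℂ and b, b₁, …, b_d ∈ ℝ. For i = 1,…,d and j ∈ ℤ/nℤ set a_{i,j} = −conj(cᵢ)·ρ^{−j}, and for w ∈ ℂ set Δ_{i,j}(w) = √((b−bᵢ)² + |w + a_{i,j}|²). Suppose w ∈ ℂ satisfies w + a_{i,j} ≠ 0 for all i, j, and define δ(w) = Σ_{i=1}^{d} Σ_{j ∈ ℤ/nℤ} ((b − bᵢ) − Δ_{i,j}(w)) / ( Δ_{i,j}(w) · (w + a_{i,j}) ). Then δ(ρ^{−m} w) = ρᵐ · δ(w). -/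
/-!
Each summand of `δ(w)` depends on `w` only through `z = w + a_{i,j}`, and since `Δ` sees only
`|z|` it is homogeneous of degree `-1` under unimodular rotations `z ↦ ζ z`. Because
`ρ^{-m} w + a_{i,j} = ρ^{-m} (w + a_{i,j-m})`, rotating `w` by `ρ^{-m}` multiplies every summand
by `ρ^m` after shifting `j` by `-m`, and the shift is harmless because the summands are
`n`-periodic in `j`.
-/

open Finset Function ComplexConjugate

theorem Function.Periodic.sum_range_add {M : Type*} [AddCommGroup M] {f : ℤ → M} {n : ℕ}
    (hf : Periodic f n) (k : ℤ) :
    ∑ j ∈ range n, f (j + k) = ∑ j ∈ range n, f j := by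
  have step (k : ℤ) : ∑ j ∈ range n, f (j + (k + 1)) = ∑ j ∈ range n, f (j + k) := by
    have h := (sum_range_succ (fun j : ℕ => f (j + k)) n).symm.trans (sum_range_succ' _ n)
    rw [show f (n + k) = f k by rw [add_comm, hf]] at h
    simpa [add_assoc, add_comm 1 k] using h.symm
  induction k using Int.induction_on with
  | zero => simp
  | succ k ih => rw [step, ih]
  | pred k ih => rw [← ih, ← step, sub_add_cancel]

theorem zpow_periodic_of_pow_eq_one {G₀ : Type*} [GroupWithZero G₀] {ρ : G₀} {n : ℕ}
    (h : ρ ^ n = 1) : Periodic (fun k : ℤ => ρ ^ k) n := by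
  rcases eq_or_ne n 0 with rfl | hn
  · simp [Periodic]
  have hρ : ρ ≠ 0 := by rintro rfl; simp [zero_pow hn] at h
  intro k
  simp [zpow_add₀ hρ, h]

/-- `deltaTerm (b - bᵢ) (w + a_{i,j})` is the `(i, j)` summand of `δ(w)`. -/
noncomputable def deltaTerm (β : ℝ) (z : ℂ) : ℂ :=
  ((β : ℂ) - (√(β ^ 2 + ‖z‖ ^ 2) : ℝ)) / ((√(β ^ 2 + ‖z‖ ^ 2) : ℝ) * z)

theorem deltaTerm_mul_of_norm_eq_one (β : ℝ) {ζ : ℂ} (hζ : ‖ζ‖ = 1) (z : ℂ) :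
    deltaTerm β (ζ * z) = ζ⁻¹ * deltaTerm β z := by
  simp only [deltaTerm, norm_mul, hζ, one_mul, div_eq_mul_inv, mul_inv]
  ring

theorem sum_range_deltaTerm_zpow_mul (β : ℝ) (u w : ℂ) {ρ : ℂ} {n : ℕ} (hρ : ρ ^ n = 1)
    (hn : n ≠ 0) (m : ℤ) :
    ∑ j ∈ range n, deltaTerm β (ρ ^ (-m) * w - u * ρ⁻¹ ^ (j : ℤ)) =
      ρ ^ m * ∑ j ∈ range n, deltaTerm β (w - u * ρ⁻¹ ^ (j : ℤ)) := by
  have hρ1 : ‖ρ‖ = 1 := Complex.norm_eq_one_of_pow_eq_one hρ hn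
  have hρ0 : ρ ≠ 0 := norm_ne_zero_iff.mp (by simp [hρ1])
  have hnorm : ‖ρ ^ (-m)‖ = 1 := by rw [norm_zpow, hρ1, one_zpow]
  have hperiodic : Periodic (fun k : ℤ => deltaTerm β (w - u * ρ⁻¹ ^ k)) n :=
    (zpow_periodic_of_pow_eq_one (ρ := ρ⁻¹) (by rw [inv_pow, hρ, inv_one])).comp
      fun z => deltaTerm β (w - u * z)
  calc ∑ j ∈ range n, deltaTerm β (ρ ^ (-m) * w - u * ρ⁻¹ ^ (j : ℤ))
      = ∑ j ∈ range n, ρ ^ m * deltaTerm β (w - u * ρ⁻¹ ^ ((j : ℤ) + -m)) := by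
        refine sum_congr rfl fun j _ => ?_
        have hfactor : ρ ^ (-m) * w - u * ρ⁻¹ ^ (j : ℤ)
            = ρ ^ (-m) * (w - u * ρ⁻¹ ^ ((j : ℤ) + -m)) := by
          rw [zpow_add₀ (inv_ne_zero hρ0), inv_zpow' ρ (-m), neg_neg, zpow_neg ρ m]
          field_simp
        rw [hfactor, deltaTerm_mul_of_norm_eq_one _ hnorm, zpow_neg, inv_inv]
    _ = ρ ^ m * ∑ j ∈ range n, deltaTerm β (w - u * ρ⁻¹ ^ (j : ℤ)) := by
        rw [← mul_sum, hperiodic.sum_range_add]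

theorem delta_equivariant_general (d n : ℕ) (hn : 1 ≤ n)
    (ρ : ℂ) (hρ : ρ ^ n = 1) (m : ℤ) (c : Fin d → ℂ) (b : ℝ) (bb : Fin d → ℝ)
    (aa : Fin d → ℕ → ℂ) (haa : ∀ i j, aa i j = -(starRingEnd ℂ) (c i) * ρ ^ (-(j : ℤ)))
    (Δ : Fin d → ℕ → ℂ → ℝ)
    (hΔ : ∀ i j (w' : ℂ), Δ i j w' = Real.sqrt ((b - bb i) ^ 2 + ‖w' + aa i j‖ ^ 2))
    (δ : ℂ → ℂ)
    (hδ : ∀ w' : ℂ, δ w' = ∑ i, ∑ j ∈ Finset.range n,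
        (((b - bb i : ℝ) : ℂ) - ((Δ i j w' : ℝ) : ℂ)) / (((Δ i j w' : ℝ) : ℂ) * (w' + aa i j)))
    (w : ℂ) :
    δ (ρ ^ (-m) * w) = ρ ^ m * δ w := by
  have hδ_eq (w' : ℂ) : δ w' = ∑ i, ∑ j ∈ range n,
      deltaTerm (b - bb i) (w' - conj (c i) * ρ⁻¹ ^ (j : ℤ)) := by
    simp only [hδ, hΔ, haa, deltaTerm, inv_zpow', neg_mul, ← sub_eq_add_neg]
  rw [hδ_eq, hδ_eq, mul_sum]
  exact sum_congr rfl fun i _ => sum_range_deltaTerm_zpow_mul _ _ w hρ (by omega) m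

/-- Equivariance of the coefficient `δ` of Hitchin's metric: with
`a_{i,j} = −conj(cᵢ)·ρ^(−j)`, `Δ_{i,j}(w) = √((b−bᵢ)² + |w + a_{i,j}|²)`, `ρ^n = 1`,
and `δ(w) = Σ_{i,j} ((b − bᵢ) − Δ_{i,j}(w)) / (Δ_{i,j}(w)·(w + a_{i,j}))`, if
`w + a_{i,j} ≠ 0` for all `i, j`, then `δ(ρ^(−m) w) = ρ^m · δ(w)`. -/
theorem delta_equivariant (d n : ℕ) (hd : 1 ≤ d) (hn : 1 ≤ n)
    (ρ : ℂ) (hρ : ρ ^ n = 1) (m : ℤ) (c : Fin d → ℂ) (b : ℝ) (bb : Fin d → ℝ)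
    (aa : Fin d → ℕ → ℂ) (haa : ∀ i j, aa i j = -(starRingEnd ℂ) (c i) * ρ ^ (-(j : ℤ)))
    (Δ : Fin d → ℕ → ℂ → ℝ)
    (hΔ : ∀ i j (w' : ℂ), Δ i j w' = Real.sqrt ((b - bb i) ^ 2 + ‖w' + aa i j‖ ^ 2))
    (δ : ℂ → ℂ)
    (hδ : ∀ w' : ℂ, δ w' = ∑ i, ∑ j ∈ Finset.range n,
        (((b - bb i : ℝ) : ℂ) - ((Δ i j w' : ℝ) : ℂ)) / (((Δ i j w' : ℝ) : ℂ) * (w' + aa i j)))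
    (w : ℂ) (hw : ∀ i : Fin d, ∀ j ∈ Finset.range n, w + aa i j ≠ 0) :
    δ (ρ ^ (-m) * w) = ρ ^ m * δ w :=
  delta_equivariant_general d n hn ρ hρ m c b bb aa haa Δ hΔ δ hδ w
end
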